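/- Let Q be a finite generalized quadrangle of order (4,12). If x is an automorphism of Q of order 7, then x fixes no point of Q. -/

import Mathlib

/-- `IsGQ I s t` : the incidence relation `I` between the (finite) point type `P`
and line type `L` is a finite generalized quadrangle of order `(s,t)`. -/
structure IsGQ {P L : Type*} (I : P → L → Prop) (s t : ℕ) : Prop where
  finP : Finite P
  finL : Finite L
  s_pos : 0 < s
  t_pos : 0 < t
  line_pts : ∀ ℓ : L, Nat.card {p : P // I p ℓ} = s + 1
  pt_lines : ∀ p : P, Nat.card {ℓ : L // I p ℓ} = t + 1
  unique_line : ∀ p q : P, p ≠ q → Nat.card {ℓ : L // I p ℓ ∧ I q ℓ} ≤ 1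
  gq_axiom : ∀ (p : P) (ℓ : L), ¬ I p ℓ →
      ∃! pl : P × L, I p pl.2 ∧ I pl.1 pl.2 ∧ I pl.1 ℓ

/-- An automorphism of the incidence structure `I` : a pair of permutations of the
points and of the lines preserving incidence. -/
@[ext] structure GQAut {P L : Type*} (I : P → L → Prop) where
  permP : Equiv.Perm P
  permL : Equiv.Perm L
  pres : ∀ p ℓ, I (permP p) (permL ℓ) ↔ I p ℓ

namespace GQAut

variable {P L : Type*} {I : P → L → Prop}

instance : Group (GQAut I) where
  mul x y := ⟨x.permP * y.permP, x.permL * y.permL, by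
    intro p ℓ
    simp only [Equiv.Perm.mul_apply]
    rw [x.pres, y.pres]⟩
  one := ⟨1, 1, fun p ℓ => Iff.rfl⟩
  inv x := ⟨x.permP⁻¹, x.permL⁻¹, by
    intro p ℓ
    simpa using (x.pres (x.permP⁻¹ p) (x.permL⁻¹ ℓ)).symm⟩
  mul_assoc a b c := by ext <;> rfl
  one_mul a := by ext <;> rfl
  mul_one a := by ext <;> rfl
  inv_mul_cancel a := by
    ext z
    · show a.permP⁻¹ (a.permP z) = z
      simp
    · show a.permL⁻¹ (a.permL z) = z
      simp

end GQAut

/-- Two points are collinear if some line is incident with both. -/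
def Collin {P L : Type*} (I : P → L → Prop) (p q : P) : Prop := ∃ ℓ, I p ℓ ∧ I q ℓ

/-- Two lines are concurrent if some point is incident with both. -/
def Concur {P L : Type*} (I : P → L → Prop) (ℓ m : L) : Prop := ∃ p, I p ℓ ∧ I p m

/-- Number of points fixed by the automorphism `x`. -/
noncomputable def alpha0 {P L : Type*} {I : P → L → Prop} (x : GQAut I) : ℕ :=
  Nat.card {p : P // x.permP p = p}

/-- Number of points moved by `x` to a distinct collinear point. -/
noncomputable def alpha1 {P L : Type*} {I : P → L → Prop} (x : GQAut I) : ℕ :=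
  Nat.card {p : P // x.permP p ≠ p ∧ Collin I p (x.permP p)}

/-- Number of points sent by `x` to a noncollinear point. -/
noncomputable def alpha2 {P L : Type*} {I : P → L → Prop} (x : GQAut I) : ℕ :=
  Nat.card {p : P // ¬ Collin I p (x.permP p)}

/-- Number of lines fixed by the automorphism `x`. -/
noncomputable def beta0 {P L : Type*} {I : P → L → Prop} (x : GQAut I) : ℕ :=
  Nat.card {ℓ : L // x.permL ℓ = ℓ}

/-- Number of lines moved by `x` to a distinct concurrent line. -/
noncomputable def beta1 {P L : Type*} {I : P → L → Prop} (x : GQAut I) : ℕ :=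
  Nat.card {ℓ : L // x.permL ℓ ≠ ℓ ∧ Concur I ℓ (x.permL ℓ)}

/-- Number of lines sent by `x` to a nonconcurrent line. -/
noncomputable def beta2 {P L : Type*} {I : P → L → Prop} (x : GQAut I) : ℕ :=
  Nat.card {ℓ : L // ¬ Concur I ℓ (x.permL ℓ)}

/-- The automorphism group is transitive on points. -/
def PointTransitive {P L : Type*} (I : P → L → Prop) : Prop :=
  ∀ p q : P, ∃ x : GQAut I, x.permP p = q

/-- The automorphism group is transitive on lines. -/
def LineTransitive {P L : Type*} (I : P → L → Prop) : Prop :=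
  ∀ ℓ m : L, ∃ x : GQAut I, x.permL ℓ = m

/-- The fixed substructure of `x` has type (2): there is a fixed point `P₀` collinear
with every fixed point, at least one line is fixed, and every fixed line passes through `P₀`. -/
def FixedType2 {P L : Type*} (I : P → L → Prop) (x : GQAut I) : Prop :=
  ∃ P₀ : P, x.permP P₀ = P₀ ∧ (∀ p, x.permP p = p → Collin I P₀ p) ∧
    (∃ ℓ, x.permL ℓ = ℓ) ∧ (∀ ℓ, x.permL ℓ = ℓ → I P₀ ℓ)

/-- The fixed substructure of `x` has type (2'): there is a fixed line `ℓ₀` concurrent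
with every fixed line, at least one point is fixed, and every fixed point lies on `ℓ₀`. -/
def FixedType2' {P L : Type*} (I : P → L → Prop) (x : GQAut I) : Prop :=
  ∃ ℓ₀ : L, x.permL ℓ₀ = ℓ₀ ∧ (∀ ℓ, x.permL ℓ = ℓ → Concur I ℓ₀ ℓ) ∧
    (∃ p, x.permP p = p) ∧ (∀ p, x.permP p = p → I p ℓ₀)

/-- The fixed substructure of `x` (fixed points and fixed lines with induced incidence)
is a generalized subquadrangle of order `(s', t')`. -/
def FixedSubGQ {P L : Type*} (I : P → L → Prop) (x : GQAut I) (s' t' : ℕ) : Prop :=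
  IsGQ (fun (p : {p : P // x.permP p = p}) (ℓ : {ℓ : L // x.permL ℓ = ℓ}) => I p.1 ℓ.1) s' t'

/-!
A point fixed by `x` forces many fixed lines, while a point moved by `x` allows only few.
Since `x` has prime order `7` and a line has `5 < 7` points, a fixed line is fixed pointwise,
and the lines through a fixed point that `x` moves come in orbits of size `7`: of the `13` lines
through a fixed point either all or exactly `6` are fixed.
If `z` is a moved point, every fixed line meets one of the `13` lines through `z`, all of which
are moved, and the fixed lines meeting a moved line `m` pass through a single fixed point on `m`,
so there are at most `13 * 6 = 78` fixed lines.
If `q` is a fixed point, it lies on at least `6` fixed lines carrying `6 * 4` further fixed points,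
each on at least `5` fixed lines missing `q`; by the quadrangle axiom these `120` lines are
distinct, so there are at least `6 + 120` fixed lines.
-/

open Finset

theorem Finset.card_mul_le_card_biUnion {ι α : Type*} [DecidableEq α] {s : Finset ι}
    {f : ι → Finset α} {n : ℕ} (hs : (s : Set ι).PairwiseDisjoint f)
    (hn : ∀ i ∈ s, n ≤ #(f i)) : #s * n ≤ #(s.biUnion f) := by
  rw [card_biUnion hs, ← smul_eq_mul]
  exact card_nsmul_le_sum s _ n hn

namespace Equiv.Perm

variable {α : Type*} [DecidableEq α] {p : ℕ} [Fact p.Prime] {σ : Perm α} {s : Finset α}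

theorem prime_dvd_card_filter_apply_ne (hσ : σ ^ p = 1) (hs : ∀ a, σ a ∈ s ↔ a ∈ s) :
    p ∣ #{a ∈ s | σ a ≠ a} := by
  have hpow : σ.subtypePerm hs ^ p ^ 1 = 1 := by
    ext; simp [subtypePerm_pow, hσ]
  have hsupp : #(σ.subtypePerm hs).support = #{a ∈ s | σ a ≠ a} := by
    rw [support_subtypePerm]
    exact card_bij (fun a _ => a.1) (by simp) (by simp) (by simp_all)
  have hcompl := card_compl_support_modEq hpow
  rw [← card_add_card_compl (σ.subtypePerm hs).support] at hcompl
  rw [← hsupp, ← Nat.modEq_zero_iff_dvd]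
  exact Nat.ModEq.add_right_cancel' _ (by rw [zero_add]; exact hcompl.symm)

theorem apply_eq_self_of_card_lt_prime (hσ : σ ^ p = 1) (hs : ∀ a, σ a ∈ s ↔ a ∈ s)
    (hcard : #s < p) {a : α} (ha : a ∈ s) : σ a = a := by
  have hmoved : #{a ∈ s | σ a ≠ a} = 0 :=
    Nat.eq_zero_of_dvd_of_lt (prime_dvd_card_filter_apply_ne hσ hs)
      ((card_filter_le _ _).trans_lt hcard)
  simpa using filter_eq_empty_iff.mp (card_eq_zero.mp hmoved) ha

end Equiv.Perm

namespace GQAut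

variable {P L : Type*} {I : P → L → Prop} (x : GQAut I)

theorem permP_pow (n : ℕ) : (x ^ n).permP = x.permP ^ n := by
  induction n with
  | zero => rfl
  | succ n ih => rw [pow_succ, pow_succ, ← ih]; rfl

theorem permL_pow (n : ℕ) : (x ^ n).permL = x.permL ^ n := by
  induction n with
  | zero => rfl
  | succ n ih => rw [pow_succ, pow_succ, ← ih]; rfl

variable {x}

theorem incident_permP_iff {a : P} {ℓ : L} (hℓ : x.permL ℓ = ℓ) : I (x.permP a) ℓ ↔ I a ℓ := by
  conv_lhs => rw [← hℓ]
  exact x.pres a ℓ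

theorem incident_permL_iff {a : P} {ℓ : L} (ha : x.permP a = a) : I a (x.permL ℓ) ↔ I a ℓ := by
  conv_lhs => rw [← ha]
  exact x.pres a ℓ

open scoped Classical in
theorem prime_dvd_card_moved_lines [Fintype L] {p : ℕ} [Fact p.Prime] (hx : x ^ p = 1)
    {a : P} (ha : x.permP a = a) : p ∣ #{ℓ | I a ℓ ∧ x.permL ℓ ≠ ℓ} := by
  have hτ : x.permL ^ p = 1 := by rw [← permL_pow, hx]; rfl
  have h := Equiv.Perm.prime_dvd_card_filter_apply_ne hτ (s := {ℓ | I a ℓ})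
    (fun ℓ => by simp [incident_permL_iff ha])
  rwa [filter_filter] at h

end GQAut

namespace IsGQ

variable {P L : Type*} {I : P → L → Prop} {s t : ℕ}

section

variable (hGQ : IsGQ I s t)
include hGQ

open scoped Classical in
theorem card_incident_points [Fintype P] (ℓ : L) : #{a | I a ℓ} = s + 1 := by
  rw [← hGQ.line_pts ℓ, Nat.card_eq_fintype_card, Fintype.card_subtype]

open scoped Classical in
theorem card_incident_lines [Fintype L] (a : P) : #{ℓ | I a ℓ} = t + 1 := by
  rw [← hGQ.pt_lines a, Nat.card_eq_fintype_card, Fintype.card_subtype]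

theorem eq_of_incident {a b : P} (hab : a ≠ b) {m n : L} (ham : I a m) (hbm : I b m)
    (han : I a n) (hbn : I b n) : m = n := by
  have := hGQ.finL
  exact congrArg Subtype.val
    ((Finite.card_le_one_iff_subsingleton.mp (hGQ.unique_line a b hab)).elim
      ⟨m, ham, hbm⟩ ⟨n, han, hbn⟩)

theorem eq_of_collin_of_incident {q a b : P} {n : L} (hq : ¬ I q n) (ha : I a n) (hb : I b n)
    (hqa : Collin I q a) (hqb : Collin I q b) : a = b := by
  obtain ⟨m, hqm, ham⟩ := hqa
  obtain ⟨m', hqm', hbm'⟩ := hqb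
  exact congrArg Prod.fst <| (hGQ.gq_axiom q n hq).unique
    (y₁ := (a, m)) ⟨hqm, ham, ha⟩ (y₂ := (b, m')) ⟨hqm', hbm', hb⟩

theorem exists_concur_of_not_incident {z : P} {ℓ : L} (hz : ¬ I z ℓ) :
    ∃ m, I z m ∧ Concur I ℓ m := by
  obtain ⟨⟨a, m⟩, ⟨hzm, ham, haℓ⟩, -⟩ := hGQ.gq_axiom z ℓ hz
  exact ⟨m, hzm, a, haℓ, ham⟩

variable {x : GQAut I}

theorem permL_eq_self_of_incident {a b : P} (hab : a ≠ b) (ha : x.permP a = a)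
    (hb : x.permP b = b) {m : L} (ham : I a m) (hbm : I b m) : x.permL m = m :=
  hGQ.eq_of_incident hab ((GQAut.incident_permL_iff ha).2 ham)
    ((GQAut.incident_permL_iff hb).2 hbm) ham hbm

theorem eq_one_of_permP_eq_self [Fintype P] (hx : ∀ a, x.permP a = a) : x = 1 := by
  classical
  ext ℓ
  · exact hx ℓ
  · have htwo : 1 < #{a | I a ℓ} := by
      rw [hGQ.card_incident_points]
      exact Nat.succ_lt_succ hGQ.s_pos
    obtain ⟨a, ha, b, hb, hab⟩ := one_lt_card.mp htwo
    simp only [mem_filter, mem_univ, true_and] at ha hb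
    exact hGQ.permL_eq_self_of_incident hab (hx a) (hx b) ha hb

theorem permP_eq_self_of_incident [Fintype P] {p : ℕ} [Fact p.Prime] (hx : x ^ p = 1)
    (hsp : s + 1 < p) {ℓ : L} (hℓ : x.permL ℓ = ℓ) {a : P} (ha : I a ℓ) : x.permP a = a := by
  classical
  have hσ : x.permP ^ p = 1 := by rw [← GQAut.permP_pow, hx]; rfl
  exact Equiv.Perm.apply_eq_self_of_card_lt_prime hσ (s := {a | I a ℓ})
    (fun b => by simp [GQAut.incident_permP_iff hℓ]) (hGQ.card_incident_points ℓ ▸ hsp)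
    (by simpa using ha)

end

section

variable (hGQ : IsGQ I s t) {x : GQAut I}
  (hline : ∀ ⦃ℓ : L⦄ ⦃a : P⦄, x.permL ℓ = ℓ → I a ℓ → x.permP a = a)
include hGQ hline

open scoped Classical

theorem card_fixed_concur_le [Fintype L] {m : L} (hm : x.permL m ≠ m) {k : ℕ}
    (hk : ∀ a, x.permP a = a → I a m → #{ℓ | I a ℓ ∧ x.permL ℓ = ℓ} ≤ k) :
    #{ℓ | x.permL ℓ = ℓ ∧ Concur I ℓ m} ≤ k := by
  rcases eq_empty_or_nonempty {ℓ | x.permL ℓ = ℓ ∧ Concur I ℓ m} with hempty | ⟨ℓ₀, hℓ₀⟩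
  · simp [hempty]
  simp only [mem_filter, mem_univ, true_and] at hℓ₀
  obtain ⟨hℓ₀, a₀, ha₀ℓ₀, ha₀m⟩ := hℓ₀
  have ha₀ := hline hℓ₀ ha₀ℓ₀
  refine (card_le_card fun ℓ hℓ => ?_).trans (hk a₀ ha₀ ha₀m)
  simp only [mem_filter, mem_univ, true_and] at hℓ ⊢
  obtain ⟨hℓ, a, haℓ, ham⟩ := hℓ
  obtain rfl : a = a₀ := by
    by_contra hne
    exact hm (hGQ.permL_eq_self_of_incident hne (hline hℓ haℓ) ha₀ ham ha₀m)
  exact ⟨haℓ, hℓ⟩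

theorem card_fixed_lines_le [Fintype L] {z : P} (hz : x.permP z ≠ z) {k : ℕ}
    (hk : ∀ a m, x.permP a = a → I a m → x.permL m ≠ m → #{ℓ | I a ℓ ∧ x.permL ℓ = ℓ} ≤ k) :
    #{ℓ | x.permL ℓ = ℓ} ≤ (t + 1) * k := by
  have hcover : ({ℓ | x.permL ℓ = ℓ} : Finset L) ⊆
      ({m | I z m} : Finset L).biUnion fun m => {ℓ | x.permL ℓ = ℓ ∧ Concur I ℓ m} := by
    intro ℓ hℓ
    simp only [mem_filter, mem_univ, true_and] at hℓ
    obtain ⟨m, hzm, hℓm⟩ := hGQ.exists_concur_of_not_incident fun hzℓ => hz (hline hℓ hzℓ)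
    simp only [mem_biUnion, mem_filter, mem_univ, true_and]
    exact ⟨m, hzm, hℓ, hℓm⟩
  refine (card_le_card hcover).trans ?_
  rw [← hGQ.card_incident_lines z]
  refine card_biUnion_le_card_mul _ _ _ fun m hzm => ?_
  simp only [mem_filter, mem_univ, true_and] at hzm
  exact hGQ.card_fixed_concur_le hline (fun hm => hz (hline hm hzm))
    (fun a ha ham => hk a m ha ham fun hm => hz (hline hm hzm))

theorem mul_le_card_fixed_points_collin [Fintype P] [Fintype L] {q : P} {k : ℕ}
    (hq : k ≤ #{ℓ | I q ℓ ∧ x.permL ℓ = ℓ}) :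
    k * s ≤ #{u | u ≠ q ∧ x.permP u = u ∧ Collin I q u} := by
  have hdisj : ((({ℓ | I q ℓ ∧ x.permL ℓ = ℓ} : Finset L)) : Set L).PairwiseDisjoint
      fun ℓ => ({a | I a ℓ} : Finset P).erase q := by
    intro ℓ hℓ ℓ' hℓ' hne
    simp only [coe_filter, mem_univ, true_and, Set.mem_ofPred_eq] at hℓ hℓ'
    refine disjoint_left.mpr fun a ha ha' => ?_
    simp only [mem_erase, mem_filter, mem_univ, true_and] at ha ha'
    exact hne (hGQ.eq_of_incident (Ne.symm ha.1) hℓ.1 ha.2 hℓ'.1 ha'.2)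
  calc k * s ≤ #{ℓ | I q ℓ ∧ x.permL ℓ = ℓ} * s := Nat.mul_le_mul_right s hq
    _ ≤ #(({ℓ | I q ℓ ∧ x.permL ℓ = ℓ} : Finset L).biUnion
          fun ℓ => ({a | I a ℓ} : Finset P).erase q) :=
        card_mul_le_card_biUnion hdisj fun ℓ hℓ => by
          simp only [mem_filter, mem_univ, true_and] at hℓ
          rw [card_erase_of_mem (by simpa using hℓ.1), hGQ.card_incident_points]; rfl
    _ ≤ #{u | u ≠ q ∧ x.permP u = u ∧ Collin I q u} := card_le_card fun a ha => by
        simp only [mem_biUnion, mem_erase, mem_filter, mem_univ, true_and] at ha ⊢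
        obtain ⟨ℓ, ⟨hqℓ, hℓ⟩, haq, haℓ⟩ := ha
        exact ⟨haq, hline hℓ haℓ, ℓ, hqℓ, haℓ⟩

theorem mul_le_card_fixed_lines_not_incident [Fintype P] [Fintype L] {q : P}
    (hq : x.permP q = q) {k : ℕ} (hk : ∀ a, x.permP a = a → k ≤ #{ℓ | I a ℓ ∧ x.permL ℓ = ℓ}) :
    k * s * (k - 1) ≤ #{n | x.permL n = n ∧ ¬ I q n} := by
  set U : Finset P := {u | u ≠ q ∧ x.permP u = u ∧ Collin I q u}
  let away : P → Finset L := fun u => {n | I u n ∧ x.permL n = n ∧ ¬ I q n}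
  have hdisj : (U : Set P).PairwiseDisjoint away := by
    intro u hu u' hu' hne
    simp only [U, coe_filter, mem_univ, true_and, Set.mem_ofPred_eq] at hu hu'
    refine disjoint_left.mpr fun n hn hn' => ?_
    simp only [away, mem_filter, mem_univ, true_and] at hn hn'
    exact hne (hGQ.eq_of_collin_of_incident hn.2.2 hn.1 hn'.1 hu.2.2 hu'.2.2)
  have haway : ∀ u ∈ U, k - 1 ≤ #(away u) := by
    intro u hu
    simp only [U, mem_filter, mem_univ, true_and] at hu
    have hthrough_q : #{n | I u n ∧ x.permL n = n ∧ I q n} ≤ 1 :=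
      card_le_one.mpr fun n hn n' hn' => by
        simp only [mem_filter, mem_univ, true_and] at hn hn'
        exact hGQ.eq_of_incident hu.1 hn.1 hn.2.2 hn'.1 hn'.2.2
    have hsplit := card_filter_add_card_filter_not
      (s := ({n | I u n ∧ x.permL n = n} : Finset L)) (fun n => I q n)
    simp only [filter_filter, and_assoc] at hsplit
    have := hk u hu.2.1
    simp only [away]
    omega
  calc k * s * (k - 1) ≤ #U * (k - 1) :=
        Nat.mul_le_mul_right _ (hGQ.mul_le_card_fixed_points_collin hline (hk q hq))
    _ ≤ #(U.biUnion away) := card_mul_le_card_biUnion hdisj haway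
    _ ≤ #{n | x.permL n = n ∧ ¬ I q n} := card_le_card fun n hn => by
        simp only [away, mem_biUnion, mem_filter, mem_univ, true_and] at hn ⊢
        obtain ⟨u, -, -, hn, hqn⟩ := hn
        exact ⟨hn, hqn⟩

theorem le_card_fixed_lines [Fintype P] [Fintype L] {q : P} (hq : x.permP q = q) {k : ℕ}
    (hk : ∀ a, x.permP a = a → k ≤ #{ℓ | I a ℓ ∧ x.permL ℓ = ℓ}) :
    k + k * s * (k - 1) ≤ #{ℓ | x.permL ℓ = ℓ} := by
  have hsplit := card_filter_add_card_filter_not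
    (s := ({ℓ | x.permL ℓ = ℓ} : Finset L)) (fun ℓ => I q ℓ)
  simp only [filter_filter] at hsplit
  have hthrough := hk q hq
  have haway := hGQ.mul_le_card_fixed_lines_not_incident hline hq hk
  simp only [and_comm (a := x.permL _ = _) (b := I q _)] at hsplit
  omega

end

section

variable [Fintype L] {x : GQAut I} {a : P}

open scoped Classical

theorem card_fixed_lines_add_card_moved_lines (hGQ : IsGQ I s t) :
    #{ℓ | I a ℓ ∧ x.permL ℓ = ℓ} + #{ℓ | I a ℓ ∧ x.permL ℓ ≠ ℓ} = t + 1 := by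
  rw [← hGQ.card_incident_lines a, ← card_filter_add_card_filter_not (s := {ℓ | I a ℓ})
    (fun ℓ => x.permL ℓ = ℓ)]
  simp only [filter_filter]

theorem six_le_card_fixed_lines (hGQ : IsGQ I s 12) (hx : x ^ 7 = 1) (ha : x.permP a = a) :
    6 ≤ #{ℓ | I a ℓ ∧ x.permL ℓ = ℓ} := by
  have : Fact (Nat.Prime 7) := ⟨by norm_num⟩
  have hsum := hGQ.card_fixed_lines_add_card_moved_lines (x := x) (a := a)
  obtain ⟨c, hc⟩ := x.prime_dvd_card_moved_lines hx ha
  omega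

theorem card_fixed_lines_le_six (hGQ : IsGQ I s 12) (hx : x ^ 7 = 1) (ha : x.permP a = a)
    {m : L} (ham : I a m) (hm : x.permL m ≠ m) : #{ℓ | I a ℓ ∧ x.permL ℓ = ℓ} ≤ 6 := by
  have : Fact (Nat.Prime 7) := ⟨by norm_num⟩
  have hsum := hGQ.card_fixed_lines_add_card_moved_lines (x := x) (a := a)
  obtain ⟨c, hc⟩ := x.prime_dvd_card_moved_lines hx ha
  have hmoved : 0 < #{ℓ | I a ℓ ∧ x.permL ℓ ≠ ℓ} := card_pos.mpr ⟨m, by simp [ham, hm]⟩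
  omega

end

end IsGQ

/-- An automorphism of order 7 of a GQ of order (4,12) fixes no point. -/
theorem statement18 {P L : Type*} (I : P → L → Prop) (hGQ : IsGQ I 4 12)
    (x : GQAut I) (hx : orderOf x = 7) :
    ∀ q : P, x.permP q ≠ q := by
  have := hGQ.finP
  have := hGQ.finL
  cases nonempty_fintype P
  cases nonempty_fintype L
  intro q hq
  have : Fact (Nat.Prime 7) := ⟨by norm_num⟩
  have hx7 : x ^ 7 = 1 := hx ▸ pow_orderOf_eq_one x
  have hline : ∀ ⦃ℓ : L⦄ ⦃a : P⦄, x.permL ℓ = ℓ → I a ℓ → x.permP a = a :=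
    fun _ _ hℓ ha => hGQ.permP_eq_self_of_incident hx7 (by norm_num) hℓ ha
  obtain ⟨z, hz⟩ : ∃ z, x.permP z ≠ z := by
    by_contra! hfix
    simp [hGQ.eq_one_of_permP_eq_self hfix] at hx
  have hupper := hGQ.card_fixed_lines_le hline hz
    fun a _ ha ham hm => hGQ.card_fixed_lines_le_six hx7 ha ham hm
  have hlower := hGQ.le_card_fixed_lines hline hq fun a ha => hGQ.six_le_card_fixed_lines hx7 ha
  omega
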